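/- (Integral identity for the predictor coefficient in the bridge ODE solution, equation (34) of the paper.) For 0 < t ≤ s < 1, ∫_s^t g(τ)²/(α_τ² σ_τ³ σ̄_τ) dτ = (2/σ_1²)·( σ̄_s/σ_s − σ̄_t/σ_t ). -/

import Mathlib

/-- Scaling coefficient `α_t = exp(∫_0^t f)`. -/
noncomputable def alpha (f : ℝ → ℝ) (t : ℝ) : ℝ := Real.exp (∫ τ in (0:ℝ)..t, f τ)

/-- Accumulated variance `σ_t² = ∫_0^t g²/α²`. -/
noncomputable def sigmaSq (f g : ℝ → ℝ) (t : ℝ) : ℝ :=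
  ∫ τ in (0:ℝ)..t, (g τ)^2 / (alpha f τ)^2

/-- Reverse accumulated variance `σ̄_t² = ∫_t^1 g²/α²`. -/
noncomputable def sigmaBarSq (f g : ℝ → ℝ) (t : ℝ) : ℝ :=
  ∫ τ in t..(1:ℝ), (g τ)^2 / (alpha f τ)^2

/-!
With `S = σ²` and `B = σ̄²` we have `S' = g²/α² = -B'` and `S + B = σ₁²`, so the quotient rule gives
`(√B/√S)' = -(σ₁²/2) · (g²/α²) / (√S³ √B)`: the integrand is an exact derivative, and the identity
is the fundamental theorem of calculus for `-(2/σ₁²) · √B/√S` on `[t, s]`.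
-/

open Set MeasureTheory intervalIntegral

theorem hasDerivAt_integral_of_continuousOn {h : ℝ → ℝ} {a b c τ : ℝ}
    (hh : ContinuousOn h (Icc a b)) (hc : c ∈ Icc a b) (hτ : τ ∈ Ioo a b) :
    HasDerivAt (fun t => ∫ x in c..t, h x) (h τ) τ :=
  integral_hasDerivAt_right
    ((hh.mono (uIcc_subset_Icc hc (Ioo_subset_Icc_self hτ))).intervalIntegrable)
    ((hh.mono Ioo_subset_Icc_self).stronglyMeasurableAtFilter isOpen_Ioo τ hτ)
    (hh.continuousAt (Icc_mem_nhds hτ.1 hτ.2))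

theorem HasDerivAt.sqrt_div_sqrt_of_add_eq {S B : ℝ → ℝ} {k c τ : ℝ}
    (hS : HasDerivAt S k τ) (hB : HasDerivAt B (-k) τ) (hsum : S τ + B τ = c)
    (hSpos : 0 < S τ) (hBpos : 0 < B τ) :
    HasDerivAt (fun x => √(B x) / √(S x)) (-(c / 2) * (k / (√(S τ) ^ 3 * √(B τ)))) τ := by
  have hsqrtS : 0 < √(S τ) := Real.sqrt_pos.2 hSpos
  refine ((hB.sqrt hBpos.ne').div (hS.sqrt hSpos.ne') hsqrtS.ne').congr_deriv ?_
  have hsum' : √(S τ) ^ 2 + √(B τ) ^ 2 = c := by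
    rw [Real.sq_sqrt hSpos.le, Real.sq_sqrt hBpos.le, hsum]
  field_simp
  linear_combination -k * hsum'

theorem integral_div_sqrt_pow_three_mul_sqrt_of_add_eq {S B h : ℝ → ℝ} {a b c : ℝ}
    (hS : ∀ τ ∈ uIcc a b, HasDerivAt S (h τ) τ) (hB : ∀ τ ∈ uIcc a b, HasDerivAt B (-h τ) τ)
    (hsum : ∀ τ ∈ uIcc a b, S τ + B τ = c) (hSpos : ∀ τ ∈ uIcc a b, 0 < S τ)
    (hBpos : ∀ τ ∈ uIcc a b, 0 < B τ) (hh : ∀ τ ∈ uIcc a b, 0 ≤ h τ) :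
    ∫ τ in a..b, h τ / √(S τ) ^ 3 / √(B τ)
      = (2 / c) * (√(B a) / √(S a) - √(B b) / √(S b)) := by
  have hc : 0 < c := hsum a left_mem_uIcc ▸ add_pos (hSpos a left_mem_uIcc) (hBpos a left_mem_uIcc)
  have hF : ∀ τ ∈ uIcc a b, HasDerivAt (fun x => -(2 / c) * (√(B x) / √(S x)))
      (h τ / √(S τ) ^ 3 / √(B τ)) τ := fun τ hτ => by
    refine (((hS τ hτ).sqrt_div_sqrt_of_add_eq (hB τ hτ) (hsum τ hτ) (hSpos τ hτ)
      (hBpos τ hτ)).const_mul (-(2 / c))).congr_deriv ?_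
    field_simp
  have hint : IntervalIntegrable (fun τ => h τ / √(S τ) ^ 3 / √(B τ)) volume a b :=
    intervalIntegrable_deriv_of_nonneg (HasDerivAt.continuousOn hF)
      (fun τ hτ => hF τ (Ioo_subset_Icc_self hτ))
      (fun τ hτ => by have := hh τ (Ioo_subset_Icc_self hτ); positivity)
  rw [integral_eq_sub_of_hasDerivAt hF hint]
  ring

section NoiseSchedule

theorem alpha_pos (f : ℝ → ℝ) (t : ℝ) : 0 < alpha f t := Real.exp_pos _

variable {f g : ℝ → ℝ}

theorem continuousOn_alpha (hf : ContinuousOn f (Icc 0 1)) : ContinuousOn (alpha f) (Icc 0 1) := by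
  have := continuousOn_primitive_interval' (μ := volume)
    (hf.intervalIntegrable_of_Icc zero_le_one) left_mem_uIcc
  rw [uIcc_of_le zero_le_one] at this
  exact Real.continuous_exp.comp_continuousOn this

theorem continuousOn_sq_div_alpha_sq
    (hf : ContinuousOn f (Icc 0 1)) (hg : ContinuousOn g (Icc 0 1)) :
    ContinuousOn (fun τ => g τ ^ 2 / alpha f τ ^ 2) (Icc 0 1) :=
  (hg.pow 2).div ((continuousOn_alpha hf).pow 2) fun τ _ => (pow_pos (alpha_pos f τ) 2).ne'

theorem intervalIntegrable_sq_div_alpha_sq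
    (hf : ContinuousOn f (Icc 0 1)) (hg : ContinuousOn g (Icc 0 1))
    {a b : ℝ} (ha : a ∈ Icc (0 : ℝ) 1) (hb : b ∈ Icc (0 : ℝ) 1) :
    IntervalIntegrable (fun τ => g τ ^ 2 / alpha f τ ^ 2) volume a b :=
  ((continuousOn_sq_div_alpha_sq hf hg).mono (uIcc_subset_Icc ha hb)).intervalIntegrable

theorem hasDerivAt_sigmaSq (hf : ContinuousOn f (Icc 0 1)) (hg : ContinuousOn g (Icc 0 1))
    {τ : ℝ} (hτ : τ ∈ Ioo (0 : ℝ) 1) :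
    HasDerivAt (sigmaSq f g) (g τ ^ 2 / alpha f τ ^ 2) τ :=
  hasDerivAt_integral_of_continuousOn (continuousOn_sq_div_alpha_sq hf hg)
    (left_mem_Icc.2 zero_le_one) hτ

theorem hasDerivAt_sigmaBarSq (hf : ContinuousOn f (Icc 0 1)) (hg : ContinuousOn g (Icc 0 1))
    {τ : ℝ} (hτ : τ ∈ Ioo (0 : ℝ) 1) :
    HasDerivAt (sigmaBarSq f g) (-(g τ ^ 2 / alpha f τ ^ 2)) τ := by
  have : sigmaBarSq f g = fun t => -∫ x in (1 : ℝ)..t, g x ^ 2 / alpha f x ^ 2 :=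
    funext fun t => integral_symm _ _
  rw [this]
  exact (hasDerivAt_integral_of_continuousOn (continuousOn_sq_div_alpha_sq hf hg)
    (right_mem_Icc.2 zero_le_one) hτ).neg

theorem sigmaSq_add_sigmaBarSq (hf : ContinuousOn f (Icc 0 1)) (hg : ContinuousOn g (Icc 0 1))
    {τ : ℝ} (hτ : τ ∈ Icc (0 : ℝ) 1) :
    sigmaSq f g τ + sigmaBarSq f g τ = sigmaSq f g 1 :=
  integral_add_adjacent_intervals
    (intervalIntegrable_sq_div_alpha_sq hf hg (left_mem_Icc.2 zero_le_one) hτ)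
    (intervalIntegrable_sq_div_alpha_sq hf hg hτ (right_mem_Icc.2 zero_le_one))

theorem sq_div_alpha_sq_pos {τ : ℝ} (hgτ : g τ ≠ 0) : 0 < g τ ^ 2 / alpha f τ ^ 2 :=
  div_pos (even_two.pow_pos hgτ) (pow_pos (alpha_pos f τ) 2)

theorem sigmaSq_pos (hf : ContinuousOn f (Icc 0 1)) (hg : ContinuousOn g (Icc 0 1))
    (hg₀ : ∀ τ ∈ Icc (0 : ℝ) 1, g τ ≠ 0) {τ : ℝ} (hτ : τ ∈ Ioc (0 : ℝ) 1) : 0 < sigmaSq f g τ :=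
  intervalIntegral_pos_of_pos_on
    (intervalIntegrable_sq_div_alpha_sq hf hg (left_mem_Icc.2 zero_le_one) (Ioc_subset_Icc_self hτ))
    (fun _ hx => sq_div_alpha_sq_pos (hg₀ _ ⟨hx.1.le, hx.2.le.trans hτ.2⟩)) hτ.1

theorem sigmaBarSq_pos (hf : ContinuousOn f (Icc 0 1)) (hg : ContinuousOn g (Icc 0 1))
    (hg₀ : ∀ τ ∈ Icc (0 : ℝ) 1, g τ ≠ 0) {τ : ℝ} (hτ : τ ∈ Ico (0 : ℝ) 1) : 0 < sigmaBarSq f g τ :=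
  intervalIntegral_pos_of_pos_on
    (intervalIntegrable_sq_div_alpha_sq hf hg (Ico_subset_Icc_self hτ)
      (right_mem_Icc.2 zero_le_one))
    (fun _ hx => sq_div_alpha_sq_pos (hg₀ _ ⟨hτ.1.trans hx.1.le, hx.2.le⟩)) hτ.2

end NoiseSchedule

/-- Integral identity for the predictor coefficient in the bridge ODE solution (equation (34)):
`∫_s^t g²/(α² σ³ σ̄) dτ = (2/σ₁²)(σ̄_s/σ_s − σ̄_t/σ_t)` for `0 < t ≤ s < 1`. -/
theorem bridge_ode_predictor_integral_identity
    (f g : ℝ → ℝ)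
    (hf : ContinuousOn f (Set.Icc 0 1)) (hg : ContinuousOn g (Set.Icc 0 1))
    (hgpos : ∀ t ∈ Set.Icc (0:ℝ) 1, 0 < g t)
    (s t : ℝ) (ht : 0 < t) (hts : t ≤ s) (hs : s < 1) :
    (∫ τ in s..t, (g τ)^2 /
        ((alpha f τ)^2 * Real.sqrt (sigmaSq f g τ)^3 * Real.sqrt (sigmaBarSq f g τ)))
      = (2 / sigmaSq f g 1) *
          (Real.sqrt (sigmaBarSq f g s) / Real.sqrt (sigmaSq f g s)
            - Real.sqrt (sigmaBarSq f g t) / Real.sqrt (sigmaSq f g t)) := by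
  have hsub : uIcc t s ⊆ Ioo 0 1 := by
    rw [uIcc_of_le hts]
    exact Icc_subset_Ioo ht hs
  have hg₀ : ∀ τ ∈ Icc (0 : ℝ) 1, g τ ≠ 0 := fun τ hτ => (hgpos τ hτ).ne'
  simp only [← div_div]
  rw [integral_symm, integral_div_sqrt_pow_three_mul_sqrt_of_add_eq (c := sigmaSq f g 1)
    (fun τ hτ => hasDerivAt_sigmaSq hf hg (hsub hτ))
    (fun τ hτ => hasDerivAt_sigmaBarSq hf hg (hsub hτ))
    (fun τ hτ => sigmaSq_add_sigmaBarSq hf hg (Ioo_subset_Icc_self (hsub hτ)))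
    (fun τ hτ => sigmaSq_pos hf hg hg₀ (Ioo_subset_Ioc_self (hsub hτ)))
    (fun τ hτ => sigmaBarSq_pos hf hg hg₀ (Ioo_subset_Ico_self (hsub hτ)))
    (fun τ _ => by positivity)]
  ring
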